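/- arXiv:2002.12453 — 4 statements merged into one kernel-verified Lean document; each statement's English description precedes it below -/
import Mathlib

section
/- Let I be an ideal of a CL-algebra L, and define the relation ρ on L by x ρ y if and only if x * ∼y ∈ I and y * ∼x ∈ I, where ∼x denotes x → 0. Then ρ is an equivalence relation on L, i.e., ρ is reflexive, symmetric, and transitive. -/
/-- A CL-algebra: a lattice with least element `⊥`, a commutative monoid structure,
a residuated implication `⇨` and an involutive negation `∼x := x ⇨ 0`. -/
class CLAlgebra (L : Type*) extends Lattice L, OrderBot L, CommMonoid L, Zero L, HImp L where
  residuation : ∀ x y z : L, x * y ≤ z ↔ x ≤ y ⇨ z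
  involution : ∀ x : L, ((x ⇨ (0 : L)) ⇨ (0 : L)) = x

/-!
Residuation and involution give `a * ∼(a * ∼b) ≤ b` for all `a, b`; chaining two instances
yields `a * ∼c ≤ ∼(∼(a * ∼b) * ∼(b * ∼c))`. So if `a * ∼b` and `b * ∼c` lie in the ideal `I`,
closure under `x, y ↦ ∼(∼x * ∼y)` and downward closure put `a * ∼c` in `I`, which is
transitivity. Reflexivity is `x * ∼x ≤ 0`.
-/

namespace CLAlgebra

local notation:max "∼" x:max => x ⇨ (0 : _)

variable {L : Type*} [CLAlgebra L]

instance : IsOrderedMonoid L where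
  mul_le_mul_left _ _ hab _ :=
    (residuation _ _ _).mpr (hab.trans ((residuation _ _ _).mp le_rfl))

lemma mul_himp_le (a c : L) : a * (a ⇨ c) ≤ c := by
  rw [mul_comm]
  exact (residuation _ _ _).mpr le_rfl

protected lemma neg_neg (a : L) : ∼∼a = a := involution a

lemma mul_neg_mul_le (a b : L) : a * ∼(a * b) ≤ ∼b := by
  refine (residuation _ _ _).mp ?_
  calc a * ∼(a * b) * b = a * b * ∼(a * b) := mul_right_comm _ _ _
    _ ≤ 0 := mul_himp_le _ _

lemma mul_neg_le_of_mul_neg (a b : L) : a * ∼(a * ∼b) ≤ b :=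
  (mul_neg_mul_le a ∼b).trans_eq (CLAlgebra.neg_neg b)

lemma mul_neg_le_neg_mul_neg (a b c : L) :
    a * ∼c ≤ ∼(∼(a * ∼b) * ∼(b * ∼c)) := by
  refine (residuation _ _ _).mp ?_
  calc a * ∼c * (∼(a * ∼b) * ∼(b * ∼c))
      = a * ∼(a * ∼b) * ∼(b * ∼c) * ∼c := by ac_rfl
    _ ≤ b * ∼(b * ∼c) * ∼c := by gcongr; exact mul_neg_le_of_mul_neg a b
    _ ≤ c * ∼c := by gcongr; exact mul_neg_le_of_mul_neg b c
    _ ≤ 0 := mul_himp_le _ _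

end CLAlgebra

open CLAlgebra in
theorem ideal_rel_equivalence_general {L : Type*} [CLAlgebra L] (I : Set L)
    -- `I` is an ideal of the CL-algebra `L`:
    (h0 : (0 : L) ∈ I)
    (hadd : ∀ x y : L, x ∈ I → y ∈ I → (((x ⇨ (0 : L)) * (y ⇨ (0 : L))) ⇨ (0 : L)) ∈ I)
    (hdown : ∀ x y : L, y ∈ I → x ≤ y → x ∈ I) :
    Equivalence (fun x y : L => x * (y ⇨ (0 : L)) ∈ I ∧ y * (x ⇨ (0 : L)) ∈ I) := by
  have mul_neg_self_mem (x : L) : x * (x ⇨ 0) ∈ I := hdown _ _ h0 (mul_himp_le x 0)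
  have mul_neg_mem_trans {a b c : L} (hab : a * (b ⇨ 0) ∈ I) (hbc : b * (c ⇨ 0) ∈ I) :
      a * (c ⇨ 0) ∈ I :=
    hdown _ _ (hadd _ _ hab hbc) (mul_neg_le_neg_mul_neg a b c)
  exact ⟨fun x => ⟨mul_neg_self_mem x, mul_neg_self_mem x⟩, And.symm,
    fun ⟨hxy, hyx⟩ ⟨hyz, hzy⟩ => ⟨mul_neg_mem_trans hxy hyz, mul_neg_mem_trans hzy hyx⟩⟩

theorem ideal_rel_equivalence {L : Type*} [CLAlgebra L] (I : Set L)
    -- `I` is an ideal of the CL-algebra `L`: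
    (h0 : (0 : L) ∈ I)
    (hadd : ∀ x y : L, x ∈ I → y ∈ I → (((x ⇨ (0 : L)) * (y ⇨ (0 : L))) ⇨ (0 : L)) ∈ I)
    (hsup : ∀ x y : L, x ∈ I → y ∈ I → x ⊔ y ∈ I)
    (hdown : ∀ x y : L, y ∈ I → x ≤ y → x ∈ I) :
    Equivalence (fun x y : L => x * (y ⇨ (0 : L)) ∈ I ∧ y * (x ⇨ (0 : L)) ∈ I) :=
  ideal_rel_equivalence_general I h0 hadd hdown
end

section
/- Let I be an ideal of a CL-algebra L, and define the relation ρ on L by x ρ y if and only if x * ∼y ∈ I and y * ∼x ∈ I, where ∼x denotes x → 0. Then ρ is compatible with the meet operation: if x ρ x₁ and y ρ y₁, then (x ⊓ y) ρ (x₁ ⊓ y₁). -/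
/-!
Writing `∼a = a ⇨ 0`, residuation makes multiplication monotone and distributive over `⊔`, and
makes `∼` antitone; with involution, `∼` is then an order-reversing bijection, whence
`∼(a ⊓ b) ≤ ∼a ⊔ ∼b`. Hence `(x ⊓ y) * ∼(x₁ ⊓ y₁) ≤ x * ∼x₁ ⊔ y * ∼y₁`, and the
right-hand side lies in `I` because ideals are closed under `⊔` and downward closed.
-/

namespace CLAlgebra

variable {L : Type*} [CLAlgebra L]

local notation:max "∼" a:max => a ⇨ (0 : _)

instance inst_s11 : IsOrderedMonoid L where
  mul_le_mul_left a b hab c :=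
    (residuation a c (b * c)).2 (hab.trans ((residuation b c (b * c)).1 le_rfl))

theorem mul_sup_le (c u v : L) : c * (u ⊔ v) ≤ c * u ⊔ c * v := by
  rw [mul_comm, residuation]
  refine sup_le ((residuation _ _ _).1 ?_) ((residuation _ _ _).1 ?_)
  · exact (mul_comm u c).le.trans le_sup_left
  · exact (mul_comm v c).le.trans le_sup_right

theorem neg_mul_le_zero (a : L) : ∼a * a ≤ 0 :=
  (residuation _ _ _).2 le_rfl

theorem neg_anti {a b : L} (h : a ≤ b) : ∼b ≤ ∼a :=
  (residuation _ _ _).1 ((mul_le_mul_right h _).trans (neg_mul_le_zero b))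

theorem neg_inf_le (a b : L) : ∼(a ⊓ b) ≤ ∼a ⊔ ∼b := by
  have h : ∼(∼a ⊔ ∼b) ≤ a ⊓ b := by
    refine le_inf ?_ ?_
    · simpa only [involution] using neg_anti (le_sup_left : ∼a ≤ ∼a ⊔ ∼b)
    · simpa only [involution] using neg_anti (le_sup_right : ∼b ≤ ∼a ⊔ ∼b)
  simpa only [involution] using neg_anti h

theorem inf_mul_neg_inf_le (a b a₁ b₁ : L) :
    (a ⊓ b) * ∼(a₁ ⊓ b₁) ≤ a * ∼a₁ ⊔ b * ∼b₁ :=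
  calc (a ⊓ b) * ∼(a₁ ⊓ b₁)
      ≤ (a ⊓ b) * (∼a₁ ⊔ ∼b₁) := mul_le_mul_right (neg_inf_le a₁ b₁) _
    _ ≤ (a ⊓ b) * ∼a₁ ⊔ (a ⊓ b) * ∼b₁ := mul_sup_le _ _ _
    _ ≤ a * ∼a₁ ⊔ b * ∼b₁ :=
      sup_le_sup (mul_le_mul_left inf_le_left _) (mul_le_mul_left inf_le_right _)

end CLAlgebra

theorem ideal_rel_inf_compat_general {L : Type*} [CLAlgebra L] (I : Set L)
    -- `I` is an ideal of the CL-algebra `L`: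
    (hsup : ∀ x y : L, x ∈ I → y ∈ I → x ⊔ y ∈ I)
    (hdown : ∀ x y : L, y ∈ I → x ≤ y → x ∈ I)
    {x x₁ y y₁ : L}
    (hx : x * (x₁ ⇨ (0 : L)) ∈ I ∧ x₁ * (x ⇨ (0 : L)) ∈ I)
    (hy : y * (y₁ ⇨ (0 : L)) ∈ I ∧ y₁ * (y ⇨ (0 : L)) ∈ I) :
    (x ⊓ y) * ((x₁ ⊓ y₁) ⇨ (0 : L)) ∈ I ∧ (x₁ ⊓ y₁) * ((x ⊓ y) ⇨ (0 : L)) ∈ I :=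
  ⟨hdown _ _ (hsup _ _ hx.1 hy.1) (CLAlgebra.inf_mul_neg_inf_le x y x₁ y₁),
    hdown _ _ (hsup _ _ hx.2 hy.2) (CLAlgebra.inf_mul_neg_inf_le x₁ y₁ x y)⟩

theorem ideal_rel_inf_compat {L : Type*} [CLAlgebra L] (I : Set L)
    -- `I` is an ideal of the CL-algebra `L`:
    (h0 : (0 : L) ∈ I)
    (hadd : ∀ x y : L, x ∈ I → y ∈ I → (((x ⇨ (0 : L)) * (y ⇨ (0 : L))) ⇨ (0 : L)) ∈ I)
    (hsup : ∀ x y : L, x ∈ I → y ∈ I → x ⊔ y ∈ I)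
    (hdown : ∀ x y : L, y ∈ I → x ≤ y → x ∈ I)
    {x x₁ y y₁ : L}
    (hx : x * (x₁ ⇨ (0 : L)) ∈ I ∧ x₁ * (x ⇨ (0 : L)) ∈ I)
    (hy : y * (y₁ ⇨ (0 : L)) ∈ I ∧ y₁ * (y ⇨ (0 : L)) ∈ I) :
    (x ⊓ y) * ((x₁ ⊓ y₁) ⇨ (0 : L)) ∈ I ∧ (x₁ ⊓ y₁) * ((x ⊓ y) ⇨ (0 : L)) ∈ I :=
  ideal_rel_inf_compat_general I hsup hdown hx hy
end

section
/- Let I be an ideal of a CL-algebra L, and define the relation ρ on L by x ρ y if and only if x * ∼y ∈ I and y * ∼x ∈ I, where ∼x denotes x → 0. Then ρ is compatible with the monoid multiplication: if x ρ x₁ and y ρ y₁, then (x * y) ρ (x₁ * y₁). -/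
/-! With `a = x ∼x₁` and `b = y ∼y₁`, one has `x ∼a ≤ x₁` and `y ∼b ≤ y₁`; multiplying these and
using `u ≤ v ↔ u ∼v ≤ 0` gives `x y ∼(x₁ y₁) ≤ ∼(∼a ∼b)`, and the right-hand side lies in the
ideal, which is downward closed. -/

namespace CLAlgebra

variable {L : Type*} [CLAlgebra L]

local notation "∼" x:max => x ⇨ (0 : L)

instance toIsOrderedMonoid : IsOrderedMonoid L where
  mul_le_mul_left a b hab c :=
    (residuation a c (b * c)).2 (hab.trans ((residuation b c (b * c)).1 le_rfl))

theorem mul_compl_le_zero_iff {a b : L} : a * ∼b ≤ 0 ↔ a ≤ b := by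
  rw [residuation, involution]

theorem mul_compl_mul_compl_le (x y : L) : x * ∼(x * ∼y) ≤ y := by
  rw [← mul_compl_le_zero_iff, mul_right_comm]
  exact mul_compl_le_zero_iff.2 le_rfl

theorem mul_mul_compl_le (x x₁ y y₁ : L) :
    x * y * ∼(x₁ * y₁) ≤ ∼(∼(x * ∼x₁) * ∼(y * ∼y₁)) := by
  rw [← residuation]
  calc x * y * ∼(x₁ * y₁) * (∼(x * ∼x₁) * ∼(y * ∼y₁))
      = x * ∼(x * ∼x₁) * (y * ∼(y * ∼y₁)) * ∼(x₁ * y₁) := by ac_rfl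
    _ ≤ 0 := mul_compl_le_zero_iff.2 <|
      mul_le_mul' (mul_compl_mul_compl_le x x₁) (mul_compl_mul_compl_le y y₁)

end CLAlgebra

theorem ideal_rel_mul_compat_general {L : Type*} [CLAlgebra L] (I : Set L)
    -- `I` is an ideal of the CL-algebra `L`:
    (hadd : ∀ x y : L, x ∈ I → y ∈ I → (((x ⇨ (0 : L)) * (y ⇨ (0 : L))) ⇨ (0 : L)) ∈ I)
    (hdown : ∀ x y : L, y ∈ I → x ≤ y → x ∈ I)
    {x x₁ y y₁ : L}
    (hx : x * (x₁ ⇨ (0 : L)) ∈ I ∧ x₁ * (x ⇨ (0 : L)) ∈ I)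
    (hy : y * (y₁ ⇨ (0 : L)) ∈ I ∧ y₁ * (y ⇨ (0 : L)) ∈ I) :
    (x * y) * ((x₁ * y₁) ⇨ (0 : L)) ∈ I ∧ (x₁ * y₁) * ((x * y) ⇨ (0 : L)) ∈ I :=
  ⟨hdown _ _ (hadd _ _ hx.1 hy.1) (CLAlgebra.mul_mul_compl_le x x₁ y y₁),
    hdown _ _ (hadd _ _ hx.2 hy.2) (CLAlgebra.mul_mul_compl_le x₁ x y₁ y)⟩

theorem ideal_rel_mul_compat {L : Type*} [CLAlgebra L] (I : Set L)
    -- `I` is an ideal of the CL-algebra `L`: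
    (h0 : (0 : L) ∈ I)
    (hadd : ∀ x y : L, x ∈ I → y ∈ I → (((x ⇨ (0 : L)) * (y ⇨ (0 : L))) ⇨ (0 : L)) ∈ I)
    (hsup : ∀ x y : L, x ∈ I → y ∈ I → x ⊔ y ∈ I)
    (hdown : ∀ x y : L, y ∈ I → x ≤ y → x ∈ I)
    {x x₁ y y₁ : L}
    (hx : x * (x₁ ⇨ (0 : L)) ∈ I ∧ x₁ * (x ⇨ (0 : L)) ∈ I)
    (hy : y * (y₁ ⇨ (0 : L)) ∈ I ∧ y₁ * (y ⇨ (0 : L)) ∈ I) :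
    (x * y) * ((x₁ * y₁) ⇨ (0 : L)) ∈ I ∧ (x₁ * y₁) * ((x * y) ⇨ (0 : L)) ∈ I :=
  ideal_rel_mul_compat_general I hadd hdown hx hy
end

section
/- Let I be an ideal of a CL-algebra L, and define the relation ρ on L by x ρ y if and only if x * ∼y ∈ I and y * ∼x ∈ I, where ∼x denotes x → 0. Then for all x, y in L: x ρ (x ⊓ y) if and only if ∼(x → y) ∈ I. (Equivalently, the congruence class of x is below the congruence class of y in the quotient order if and only if ∼(x → y) ∈ I.) -/
/-!
Since `∼(x ⇨ y) = x * ∼y`, the claim is about `x * ∼y`. As `∼y ≤ ∼(x ⊓ y)`, the forward direction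
is downward closure. Conversely, negation is an order anti-isomorphism by involutivity, so
`∼(x ⊓ y) = ∼x ⊔ ∼y`; multiplication distributes over `⊔` (it is a left adjoint), whence
`x * ∼(x ⊓ y) ≤ 0 ⊔ x * ∼y ∈ I`, while `(x ⊓ y) * ∼x ≤ 0` by residuation.
-/

namespace CLAlgebra

variable {L : Type*} [CLAlgebra L]

local notation "∼" a => a ⇨ (0 : L)

theorem gc_mul_right_himp (b : L) : GaloisConnection (· * b) (b ⇨ ·) :=
  fun a c => residuation a b c

theorem gc_mul_left_himp (a : L) : GaloisConnection (a * ·) (a ⇨ ·) := by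
  simpa only [mul_comm a] using gc_mul_right_himp a

protected theorem himp_le_himp_right {a b : L} (h : a ≤ b) (c : L) : b ⇨ c ≤ a ⇨ c := by
  rw [← residuation, mul_comm]
  exact ((gc_mul_right_himp _).monotone_l h).trans ((gc_mul_left_himp b).l_u_le c)

protected theorem himp_himp (a b c : L) : a ⇨ b ⇨ c = a * b ⇨ c :=
  eq_of_forall_le_iff fun z => by simp only [← residuation, mul_assoc]

theorem neg_himp (a b : L) : (∼(a ⇨ b)) = a * ∼b := by
  rw [← involution (a * ∼b), ← CLAlgebra.himp_himp, involution]

def negOrderIso : L ≃o Lᵒᵈ where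
  toFun a := OrderDual.toDual (∼a)
  invFun a := ∼(OrderDual.ofDual a)
  left_inv := involution
  right_inv a := involution (OrderDual.ofDual a)
  map_rel_iff' {a b} := by
    change (∼b) ≤ (∼a) ↔ a ≤ b
    refine ⟨fun h => ?_, fun h => CLAlgebra.himp_le_himp_right h 0⟩
    simpa only [involution] using CLAlgebra.himp_le_himp_right h 0

protected theorem neg_inf (a b : L) : (∼(a ⊓ b)) = (∼a) ⊔ ∼b :=
  negOrderIso.map_inf a b

end CLAlgebra

open CLAlgebra in
theorem ideal_rel_le_iff_general {L : Type*} [CLAlgebra L] (I : Set L)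
    -- `I` is an ideal of the CL-algebra `L`:
    (h0 : (0 : L) ∈ I)
    (hsup : ∀ x y : L, x ∈ I → y ∈ I → x ⊔ y ∈ I)
    (hdown : ∀ x y : L, y ∈ I → x ≤ y → x ∈ I)
    (x y : L) :
    (x * ((x ⊓ y) ⇨ (0 : L)) ∈ I ∧ (x ⊓ y) * (x ⇨ (0 : L)) ∈ I) ↔
      ((x ⇨ y) ⇨ (0 : L)) ∈ I := by
  rw [neg_himp]
  constructor
  · rintro ⟨h, -⟩
    exact hdown _ _ h
      ((gc_mul_left_himp x).monotone_l (CLAlgebra.himp_le_himp_right inf_le_right 0))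
  · intro h
    have h_left : x * ((x ⊓ y) ⇨ 0) ≤ 0 ⊔ x * (y ⇨ 0) := by
      rw [CLAlgebra.neg_inf, (gc_mul_left_himp x).l_sup]
      exact sup_le_sup_right ((gc_mul_left_himp x).l_u_le 0) _
    have h_right : (x ⊓ y) * (x ⇨ 0) ≤ 0 := by
      rw [residuation, involution]
      exact inf_le_left
    exact ⟨hdown _ _ (hsup _ _ h0 h) h_left, hdown _ _ h0 h_right⟩

theorem ideal_rel_le_iff {L : Type*} [CLAlgebra L] (I : Set L)
    -- `I` is an ideal of the CL-algebra `L`: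
    (h0 : (0 : L) ∈ I)
    (hadd : ∀ x y : L, x ∈ I → y ∈ I → (((x ⇨ (0 : L)) * (y ⇨ (0 : L))) ⇨ (0 : L)) ∈ I)
    (hsup : ∀ x y : L, x ∈ I → y ∈ I → x ⊔ y ∈ I)
    (hdown : ∀ x y : L, y ∈ I → x ≤ y → x ∈ I)
    (x y : L) :
    (x * ((x ⊓ y) ⇨ (0 : L)) ∈ I ∧ (x ⊓ y) * (x ⇨ (0 : L)) ∈ I) ↔
      ((x ⇨ y) ⇨ (0 : L)) ∈ I :=
  ideal_rel_le_iff_general I h0 hsup hdown x y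
end
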